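/- Fix a prime p and n ≥ 2, and let G_n be the group defined by the presentation ⟨k_{n−1}, k_n, h_0, …, h_{p^n−1} | k_i^p = h_j^p = 1; [h_i, h_j] = 1; [k_{n−1}, h_i] = 1 for i ≠ p^{n−1}; k_n = [k_{n−1}, h_{p^{n−1}}] central⟩. Let K_{n−1} = ⟨k_{n−1}⟩ × ⟨h_0, …, h_{p^{n−1}−1}⟩ inside G_n. Then the assignment k_n ↦ 1, h_j ↦ h_{j mod p^{n−1}} extends to a well-defined group homomorphism ρ_n : G_n → K_{n−1} which restricts to the identity on K_{n−1} (i.e., ρ_n is a retraction). -/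

import Mathlib

/-- Generators of the group `G_n`: `Sum.inl 0 = k_{n-1}`, `Sum.inl 1 = k_n`,
`Sum.inr j = h_j` for `j < p^n`. -/
abbrev GnGen (p n : ℕ) : Type := Fin 2 ⊕ Fin (p ^ n)

open scoped commutatorElement

/-- The defining relations of `G_n`:
`k_i^p = h_j^p = 1`; the `h`'s commute; `k_{n-1}` commutes with `h_i` for `i ≠ p^{n-1}`;
`k_n = [k_{n-1}, h_{p^{n-1}}]`; and `k_n` is central. -/
def GnRels (p n : ℕ) : Set (FreeGroup (GnGen p n)) :=
  { w | (∃ i : Fin 2, w = (FreeGroup.of (Sum.inl i : GnGen p n)) ^ p) ∨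
        (∃ j : Fin (p ^ n), w = (FreeGroup.of (Sum.inr j : GnGen p n)) ^ p) ∨
        (∃ i j : Fin (p ^ n),
          w = ⁅FreeGroup.of (Sum.inr i : GnGen p n), FreeGroup.of (Sum.inr j)⁆) ∨
        (∃ i : Fin (p ^ n), (i : ℕ) ≠ p ^ (n - 1) ∧
          w = ⁅FreeGroup.of (Sum.inl 0 : GnGen p n), FreeGroup.of (Sum.inr i)⁆) ∨
        (∃ j : Fin (p ^ n), (j : ℕ) = p ^ (n - 1) ∧
          w = (FreeGroup.of (Sum.inl 1 : GnGen p n))⁻¹ *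
            ⁅FreeGroup.of (Sum.inl 0 : GnGen p n), FreeGroup.of (Sum.inr j)⁆) ∨
        (∃ g : GnGen p n, w = ⁅FreeGroup.of (Sum.inl 1 : GnGen p n), FreeGroup.of g⁆) }

/-- The group `G_n` from Wilkes' inaccessible pro-`p` group example. -/
abbrev Gn (p n : ℕ) : Type := PresentedGroup (GnRels p n)
/-- The subgroup `K_{n-1} = ⟨k_{n-1}⟩ × ⟨h_0, …, h_{p^{n-1}-1}⟩` of `G_n`. -/
def Kn (p n : ℕ) : Subgroup (Gn p n) :=
  Subgroup.closure ({PresentedGroup.of (rels := GnRels p n) (Sum.inl 0)} ∪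
    {x | ∃ j : Fin (p ^ n), (j : ℕ) < p ^ (n - 1) ∧
      x = PresentedGroup.of (rels := GnRels p n) (Sum.inr j)})

/-!
Sending `k_n ↦ 1` and `h_j ↦ h_{j mod p^{n-1}}` respects every relation: the indices
`j mod p^{n-1}` are never `p^{n-1}`, so `k_{n-1}` commutes with all images of the `h_j`, and the
relation `k_n = [k_{n-1}, h_{p^{n-1}}]` becomes `1 = [k_{n-1}, h_0]`, itself a relation of `G_n`.
All images of generators lie in `K_{n-1}` and the generators of `K_{n-1}` are fixed, so the
induced endomorphism is a retraction onto `K_{n-1}`.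
-/

namespace Gn

variable {p n : ℕ}

abbrev k : Gn p n := PresentedGroup.of (Sum.inl 0)

abbrev h (j : Fin (p ^ n)) : Gn p n := PresentedGroup.of (Sum.inr j)

lemma of_pow_eq_one (g : GnGen p n) : (PresentedGroup.of g : Gn p n) ^ p = 1 := by
  have hrel : FreeGroup.of g ^ p ∈ GnRels p n := by
    rcases g with i | j
    exacts [Or.inl ⟨i, rfl⟩, Or.inr (Or.inl ⟨j, rfl⟩)]
  exact (map_pow _ _ _).symm.trans (PresentedGroup.one_of_mem hrel)

lemma commutatorElement_h_h (i j : Fin (p ^ n)) : ⁅h i, h j⁆ = (1 : Gn p n) := by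
  have hrel : ⁅FreeGroup.of (Sum.inr i), FreeGroup.of (Sum.inr j)⁆ ∈ GnRels p n :=
    Or.inr (Or.inr (Or.inl ⟨i, j, rfl⟩))
  exact (map_commutatorElement _ _ _).symm.trans (PresentedGroup.one_of_mem hrel)

lemma commutatorElement_k_h {i : Fin (p ^ n)} (hi : (i : ℕ) ≠ p ^ (n - 1)) :
    ⁅(k : Gn p n), h i⁆ = 1 := by
  have hrel : ⁅FreeGroup.of (Sum.inl 0 : GnGen p n), FreeGroup.of (Sum.inr i)⁆ ∈ GnRels p n :=
    Or.inr (Or.inr (Or.inr (Or.inl ⟨i, hi, rfl⟩)))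
  exact (map_commutatorElement _ _ _).symm.trans (PresentedGroup.one_of_mem hrel)

def foldIndex (j : Fin (p ^ n)) : Fin (p ^ n) :=
  ⟨j % p ^ (n - 1), (Nat.mod_le _ _).trans_lt j.2⟩

lemma foldIndex_lt (hp : 0 < p) (j : Fin (p ^ n)) : (foldIndex j : ℕ) < p ^ (n - 1) :=
  Nat.mod_lt _ (pow_pos hp _)

lemma foldIndex_of_lt {j : Fin (p ^ n)} (hj : (j : ℕ) < p ^ (n - 1)) : foldIndex j = j :=
  Fin.ext (Nat.mod_eq_of_lt hj)

def retractionGen : GnGen p n → Gn p n :=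
  Sum.elim ![k, 1] (fun j => h (foldIndex j))

lemma lift_retractionGen_rels (hp : 0 < p) :
    ∀ r ∈ GnRels p n, FreeGroup.lift retractionGen r = 1 := by
  rintro r (⟨i, rfl⟩ | ⟨j, rfl⟩ | ⟨i, j, rfl⟩ | ⟨i, -, rfl⟩ | ⟨j, -, rfl⟩ | ⟨g, rfl⟩) <;>
    simp only [map_pow, map_mul, map_inv, map_commutatorElement, FreeGroup.lift_apply_of,
      retractionGen, Sum.elim_inl, Sum.elim_inr]
  · fin_cases i
    · exact of_pow_eq_one _
    · exact one_pow p
  · exact of_pow_eq_one _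
  · exact commutatorElement_h_h _ _
  · exact commutatorElement_k_h (foldIndex_lt hp i).ne
  · simpa using commutatorElement_k_h (foldIndex_lt hp j).ne
  · simp

def retraction (hp : 0 < p) : Gn p n →* Gn p n :=
  PresentedGroup.toGroup (lift_retractionGen_rels hp)

variable (hp : 0 < p)

lemma retraction_of (g : GnGen p n) : retraction hp (PresentedGroup.of g) = retractionGen g :=
  PresentedGroup.toGroup.of _

lemma k_mem_Kn : (k : Gn p n) ∈ Kn p n :=
  Subgroup.subset_closure (Or.inl rfl)

lemma h_mem_Kn {j : Fin (p ^ n)} (hj : (j : ℕ) < p ^ (n - 1)) : h j ∈ Kn p n :=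
  Subgroup.subset_closure (Or.inr ⟨j, hj, rfl⟩)

lemma range_retraction_le : (retraction hp).range ≤ Kn p n := by
  rw [MonoidHom.range_eq_map, ← PresentedGroup.closure_range_of, MonoidHom.map_closure,
    Subgroup.closure_le, ← Set.range_comp]
  rintro _ ⟨(i | j), rfl⟩
  · fin_cases i
    · exact k_mem_Kn
    · exact one_mem _
  · exact h_mem_Kn (foldIndex_lt hp j)

lemma retraction_apply_of_mem_Kn {x : Gn p n} (hx : x ∈ Kn p n) : retraction hp x = x := by
  refine MonoidHom.eqOn_closure (g := MonoidHom.id _) ?_ hx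
  rintro _ (rfl | ⟨j, hj, rfl⟩)
  · exact retraction_of hp _
  · simp only [retraction_of, retractionGen, Sum.elim_inr, foldIndex_of_lt hj, MonoidHom.id_apply]

end Gn

theorem stmt15_general (p n : ℕ) (hp : p.Prime) :
    ∃ ρ : Gn p n →* Gn p n,
      ρ (PresentedGroup.of (rels := GnRels p n) (Sum.inl 1)) = 1 ∧
      ρ (PresentedGroup.of (rels := GnRels p n) (Sum.inl 0)) =
        PresentedGroup.of (rels := GnRels p n) (Sum.inl 0) ∧
      (∀ j j' : Fin (p ^ n), (j' : ℕ) = (j : ℕ) % p ^ (n - 1) →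
        ρ (PresentedGroup.of (rels := GnRels p n) (Sum.inr j)) =
          PresentedGroup.of (rels := GnRels p n) (Sum.inr j')) ∧
      ρ.range ≤ Kn p n ∧ (∀ x ∈ Kn p n, ρ x = x) := by
  refine ⟨Gn.retraction hp.pos, Gn.retraction_of _ _, Gn.retraction_of _ _,
    fun j j' hj' => ?_, Gn.range_retraction_le hp.pos,
    fun x => Gn.retraction_apply_of_mem_Kn hp.pos⟩
  rw [Gn.retraction_of, show j' = Gn.foldIndex j from Fin.ext hj']
  rfl

/-- For a prime `p` and `n ≥ 2`, the assignment `k_n ↦ 1`,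
`h_j ↦ h_{j mod p^{n−1}}` (and `k_{n-1} ↦ k_{n-1}`) extends to a well-defined group
homomorphism `ρ_n : G_n → K_{n−1}` restricting to the identity on `K_{n−1}`
(i.e. `ρ_n` is a retraction of `G_n` onto `K_{n-1}`). -/
theorem stmt15 (p n : ℕ) (hp : p.Prime) (hn : 2 ≤ n) :
    ∃ ρ : Gn p n →* Gn p n,
      ρ (PresentedGroup.of (rels := GnRels p n) (Sum.inl 1)) = 1 ∧
      ρ (PresentedGroup.of (rels := GnRels p n) (Sum.inl 0)) =
        PresentedGroup.of (rels := GnRels p n) (Sum.inl 0) ∧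
      (∀ j j' : Fin (p ^ n), (j' : ℕ) = (j : ℕ) % p ^ (n - 1) →
        ρ (PresentedGroup.of (rels := GnRels p n) (Sum.inr j)) =
          PresentedGroup.of (rels := GnRels p n) (Sum.inr j')) ∧
      ρ.range ≤ Kn p n ∧ (∀ x ∈ Kn p n, ρ x = x) :=
  stmt15_general p n hp
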